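/- Let λ > 0 and β ∈ (0,1). For any embeddings U, V and weight vector w such that U and V are not both zero, the rescaled point (βU, βV, β⁻¹w) satisfies F(βU, βV, β⁻¹w) < F(U, V, w), where F is the generalized CF objective with the minus interaction f(u,v) = u − v. In particular, the data-fitting term is unchanged (since ⟨β⁻¹w, βu_i − βv_j⟩ = ⟨w, u_i − v_j⟩ for every (i,j)), while the regularization term is strictly decreased. -/
import Mathlib


open Finset

/-- Generalized CF objective with the minus interaction `f(u,v) = u - v`:
`F(U,V,w) = Σ_{(i,j)∈Ω} ℓ(⟨w, u_i - v_j⟩, O_{ij}) + (λ/2)Σ_i ‖u_i‖² + (λ/2)Σ_j ‖v_j‖²`. -/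
noncomputable def cfObjMinus {k m n : ℕ} (lam : ℝ) (Ω : Finset (Fin m × Fin n))
    (O : Fin m × Fin n → ℝ) (ℓ : ℝ × ℝ → ℝ)
    (U : Fin m → Fin k → ℝ) (V : Fin n → Fin k → ℝ) (w : Fin k → ℝ) : ℝ :=
  (∑ p ∈ Ω, ℓ (∑ l, w l * (U p.1 l - V p.2 l), O p))
    + lam / 2 * ∑ i, ∑ l, (U i l) ^ 2
    + lam / 2 * ∑ j, ∑ l, (V j l) ^ 2

/-- For `λ > 0` and `β ∈ (0,1)`, if `U` and `V` are not both zero, then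
`F(βU, βV, β⁻¹w) < F(U, V, w)` for the minus interaction; the data-fitting term is
unchanged by the rescaling while the regularization term strictly decreases. -/
theorem rescaling_decreases_minus_objective {k m n : ℕ} (lam : ℝ) (hlam : 0 < lam)
    (β : ℝ) (hβ : β ∈ Set.Ioo (0 : ℝ) 1)
    (Ω : Finset (Fin m × Fin n)) (O : Fin m × Fin n → ℝ) (ℓ : ℝ × ℝ → ℝ)
    (U : Fin m → Fin k → ℝ) (V : Fin n → Fin k → ℝ) (w : Fin k → ℝ)
    (hUV : ¬ (U = 0 ∧ V = 0)) :
    cfObjMinus lam Ω O ℓ (fun i l => β * U i l) (fun j l => β * V j l)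
        (fun l => β⁻¹ * w l)
      < cfObjMinus lam Ω O ℓ U V w ∧
    (∀ i j, (∑ l, (β⁻¹ * w l) * ((β * U i l) - (β * V j l)))
        = ∑ l, w l * (U i l - V j l)) ∧
    (lam / 2 * ∑ i, ∑ l, (β * U i l) ^ 2 + lam / 2 * ∑ j, ∑ l, (β * V j l) ^ 2
      < lam / 2 * ∑ i, ∑ l, (U i l) ^ 2 + lam / 2 * ∑ j, ∑ l, (V j l) ^ 2) := by
  obtain ⟨hβ0, hβ1⟩ := hβ
  have hne : β ≠ 0 := ne_of_gt hβ0
  have hdot : ∀ i j, (∑ l, (β⁻¹ * w l) * ((β * U i l) - (β * V j l)))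
      = ∑ l, w l * (U i l - V j l) := by
    intro i j
    refine Finset.sum_congr rfl fun l _ => ?_
    field_simp
  set A := ∑ i, ∑ l, (U i l) ^ 2 with hA
  set B := ∑ j, ∑ l, (V j l) ^ 2 with hB
  have hAnn : 0 ≤ A := Finset.sum_nonneg fun i _ =>
    Finset.sum_nonneg fun l _ => sq_nonneg _
  have hBnn : 0 ≤ B := Finset.sum_nonneg fun j _ =>
    Finset.sum_nonneg fun l _ => sq_nonneg _
  have hS : 0 < A + B := by
    rcases lt_or_eq_of_le (by positivity : (0:ℝ) ≤ A + B) with h | h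
    · exact h
    exfalso
    have hA0 : A = 0 := le_antisymm (by linarith) hAnn
    have hB0 : B = 0 := le_antisymm (by linarith) hBnn
    apply hUV
    constructor
    · funext i l
      have h1 : ∀ i ∈ Finset.univ, (0:ℝ) ≤ ∑ l, (U i l)^2 :=
        fun i _ => Finset.sum_nonneg fun l _ => sq_nonneg _
      have := (Finset.sum_eq_zero_iff_of_nonneg h1).mp hA0.symm.symm i (Finset.mem_univ i)
      have h2 := (Finset.sum_eq_zero_iff_of_nonneg
        (fun l _ => sq_nonneg (U i l))).mp this l (Finset.mem_univ l)
      exact pow_eq_zero_iff (by norm_num) |>.mp h2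
    · funext j l
      have h1 : ∀ j ∈ Finset.univ, (0:ℝ) ≤ ∑ l, (V j l)^2 :=
        fun j _ => Finset.sum_nonneg fun l _ => sq_nonneg _
      have := (Finset.sum_eq_zero_iff_of_nonneg h1).mp hB0 j (Finset.mem_univ j)
      have h2 := (Finset.sum_eq_zero_iff_of_nonneg
        (fun l _ => sq_nonneg (V j l))).mp this l (Finset.mem_univ l)
      exact pow_eq_zero_iff (by norm_num) |>.mp h2
  have hA' : (∑ i, ∑ l, (β * U i l) ^ 2) = β ^ 2 * A := by
    rw [hA, Finset.mul_sum]
    refine Finset.sum_congr rfl fun i _ => ?_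
    rw [Finset.mul_sum]
    exact Finset.sum_congr rfl fun l _ => by ring
  have hB' : (∑ j, ∑ l, (β * V j l) ^ 2) = β ^ 2 * B := by
    rw [hB, Finset.mul_sum]
    refine Finset.sum_congr rfl fun j _ => ?_
    rw [Finset.mul_sum]
    exact Finset.sum_congr rfl fun l _ => by ring
  have hreg : lam / 2 * ∑ i, ∑ l, (β * U i l) ^ 2 + lam / 2 * ∑ j, ∑ l, (β * V j l) ^ 2
      < lam / 2 * A + lam / 2 * B := by
    rw [hA', hB']
    have hβ2 : β ^ 2 < 1 := by nlinarith
    nlinarith [mul_pos hlam hS, mul_pos hlam (mul_pos hS (by linarith : (0:ℝ) < 1 - β ^ 2))]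
  refine ⟨?_, hdot, hreg⟩
  unfold cfObjMinus
  have hloss : (∑ p ∈ Ω, ℓ (∑ l, (β⁻¹ * w l) * ((β * U p.1 l) - (β * V p.2 l)), O p))
      = ∑ p ∈ Ω, ℓ (∑ l, w l * (U p.1 l - V p.2 l), O p) := by
    refine Finset.sum_congr rfl fun p _ => ?_
    rw [hdot p.1 p.2]
  rw [hloss]
  linarith [hreg]
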